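/- arXiv:2411.16200 — 3 statements merged into one kernel-verified Lean document; each statement's English description precedes it below -/
import Mathlib

section
/- Let E : ℝ^d → ℝ be twice continuously differentiable, x* a critical point of E (∇E(x*) = 0), and δ > 0 such that on U(x*,δ) = {x : ‖x−x*‖₂ < δ}: (i) ‖∇²E(x) − ∇²E(y)‖₂ ≤ M‖x−y‖₂ for all x,y ∈ U(x*,δ); (ii) every eigenvalue λ of ∇²E(x) satisfies |λ| ∈ [μ, L] for 0 < μ < L. Let E_δ : ℝ^d → ℝ be twice continuously differentiable with, on U(x*,δ): ‖∇²E_δ(x) − ∇²E_δ(y)‖₂ ≤ ε‖x−y‖₂, ‖∇²E_δ(x)‖₂ ≤ ε, and ‖∇E_δ(x)‖₂ ≤ ε. If ε ≤ min{μ/2, μ²/(32M), μδ/12, M}, then there exists x*_NN with ∇(E + E_δ)(x*_NN) = 0 and ‖x*_NN − x*‖₂ ≤ 4ε/μ. -/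
/-! By the spectral theorem, the symmetric Hessian `A = ∇²E(x*)` satisfies `μ‖v‖ ≤ ‖A v‖`, so
it is invertible with `‖A⁻¹‖ ≤ 1/μ`. On the closed ball of radius `r = 4ε/μ`, which lies in
`U(x*, δ)`, the derivative of the surrogate gradient `∇E + ∇E_δ` stays within `Mr + ε ≤ 5μ/8` of
`A`. Graves' surjectivity theorem then says that this gradient maps the ball onto a ball around
`∇E_δ(x*)` of radius `(μ - Mr - ε) r ≥ 3ε/2`, which contains `0` since `‖∇E_δ(x*)‖ ≤ ε`. -/

open Metric InnerProductSpace
open scoped NNReal RealInnerProductSpace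

section Gradient

variable {F : Type*} [NormedAddCommGroup F] [InnerProductSpace ℝ F] [CompleteSpace F]

theorem inner_fderiv_gradient_apply (f : F → ℝ) (x u v : F) :
    ⟪fderiv ℝ (gradient f) x u, v⟫_ℝ = fderiv ℝ (fderiv ℝ f) x u v := by
  have h : gradient f = (toDual ℝ F).symm ∘ fderiv ℝ f := rfl
  rw [h, LinearIsometryEquiv.comp_fderiv]
  exact toDual_symm_apply

theorem ContDiffAt.isSymmetric_fderiv_gradient {f : F → ℝ} {x : F} (hf : ContDiffAt ℝ 2 f x) :
    (fderiv ℝ (gradient f) x : F →ₗ[ℝ] F).IsSymmetric := fun u v => by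
  change ⟪fderiv ℝ (gradient f) x u, v⟫_ℝ = ⟪u, fderiv ℝ (gradient f) x v⟫_ℝ
  rw [real_inner_comm _ u,
    inner_fderiv_gradient_apply, inner_fderiv_gradient_apply, hf.isSymmSndFDerivAt (by simp)]

theorem ContDiff.gradient {f : F → ℝ} {n : WithTop ℕ∞} (hf : ContDiff ℝ (n + 1) f) :
    ContDiff ℝ n (gradient f) :=
  (toDual ℝ F).symm.contDiff.comp (hf.fderiv_right le_rfl)

theorem gradient_fun_add {f g : F → ℝ} {x : F} (hf : DifferentiableAt ℝ f x)
    (hg : DifferentiableAt ℝ g x) :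
    gradient (fun y => f y + g y) x = gradient f x + gradient g x := by
  simp only [gradient, fderiv_fun_add hf hg, map_add]

end Gradient

section Spectral

variable {E : Type*} [NormedAddCommGroup E] [InnerProductSpace ℝ E] [FiniteDimensional ℝ E]

theorem LinearMap.IsSymmetric.mul_norm_le_norm_apply {T : E →ₗ[ℝ] E} (hT : T.IsSymmetric)
    {μ : ℝ} (hμ : 0 ≤ μ) (hspec : ∀ lam, Module.End.HasEigenvalue T lam → μ ≤ |lam|) (x : E) :
    μ * ‖x‖ ≤ ‖T x‖ := by
  set b := hT.eigenvectorBasis rfl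
  have hnorm : ∀ v : E, ‖v‖ ^ 2 = ∑ i, b.repr v i ^ 2 := fun v => by
    rw [← b.repr.norm_map v, EuclideanSpace.norm_sq_eq]
    simp only [Real.norm_eq_abs, sq_abs]
  have hsq : (μ * ‖x‖) ^ 2 ≤ ‖T x‖ ^ 2 := by
    rw [mul_pow, hnorm, hnorm, Finset.mul_sum]
    refine Finset.sum_le_sum fun i _ => ?_
    rw [hT.eigenvectorBasis_apply_self_apply rfl x i, mul_pow]
    have hμi : μ ^ 2 ≤ hT.eigenvalues rfl i ^ 2 := by
      rw [← sq_abs (hT.eigenvalues rfl i)]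
      exact pow_le_pow_left₀ hμ (hspec _ (hT.hasEigenvalue_eigenvalues rfl i)) 2
    exact mul_le_mul_of_nonneg_right hμi (sq_nonneg _)
  exact (pow_le_pow_iff_left₀ (by positivity) (norm_nonneg _) two_ne_zero).mp hsq

end Spectral

section InverseFunction

variable {𝕜 E F : Type*} [NontriviallyNormedField 𝕜]
  [NormedAddCommGroup E] [NormedSpace 𝕜 E] [NormedAddCommGroup F] [NormedSpace 𝕜 F]

noncomputable def ContinuousLinearMap.nonlinearRightInverseOfBound [FiniteDimensional 𝕜 E]
    (A : E →L[𝕜] E) (K : ℝ≥0) (hA : ∀ x, ‖x‖ ≤ K * ‖A x‖) : A.NonlinearRightInverse :=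
  let e := LinearEquiv.ofInjectiveEndo A.toLinearMap (A.antilipschitz_of_bound hA).injective
  { toFun := e.symm
    nnnorm := K
    bound' := fun y => by
      have h := hA (e.symm y)
      rwa [show A (e.symm y) = y from e.apply_symm_apply y] at h
    right_inv' := e.apply_symm_apply }

theorem Convex.approximatesLinearOn_of_norm_fderiv_sub_le [NormedSpace ℝ E] [NormedSpace ℝ F]
    {s : Set E} (hs : Convex ℝ s) {f : E → F} {A : E →L[ℝ] F} {c : ℝ≥0}
    (hf : ∀ x ∈ s, DifferentiableAt ℝ f x) (bound : ∀ x ∈ s, ‖fderiv ℝ f x - A‖ ≤ c) :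
    ApproximatesLinearOn f A s c := fun _ hx _ hy =>
  hs.norm_image_sub_le_of_norm_fderiv_le' hf bound hy hx

theorem ApproximatesLinearOn.exists_eq_zero_mem_closedBall [CompleteSpace 𝕜]
    [FiniteDimensional 𝕜 E] {f : E → E} {A : E →L[𝕜] E} {μ : ℝ} (hμ : 0 < μ)
    (hA : ∀ v, μ * ‖v‖ ≤ ‖A v‖) {x : E} {r : ℝ} {c : ℝ≥0}
    (hf : ApproximatesLinearOn f A (closedBall x r) c) (hr : 0 ≤ r)
    (hfx : ‖f x‖ ≤ (μ - c) * r) : ∃ y ∈ closedBall x r, f y = 0 := by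
  have := FiniteDimensional.complete 𝕜 E
  let Ainv := A.nonlinearRightInverseOfBound ⟨μ⁻¹, inv_nonneg.mpr hμ.le⟩ fun v => by
    change ‖v‖ ≤ μ⁻¹ * ‖A v‖
    rw [← div_eq_inv_mul, le_div_iff₀ hμ, mul_comm]
    exact hA v
  have hAinv : (Ainv.nnnorm : ℝ)⁻¹ = μ := inv_inv μ
  refine hf.surjOn_closedBall_of_nonlinearRightInverse Ainv hr subset_rfl ?_
  rwa [mem_closedBall, dist_zero_left, hAinv]

theorem approximatesLinearOn_add_closedBall [NormedSpace ℝ E] [NormedSpace ℝ F]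
    {f g : E → F} (hf : Differentiable ℝ f) (hg : Differentiable ℝ g) {x : E} {r M ε : ℝ}
    (hf' : ∀ z ∈ closedBall x r, ‖fderiv ℝ f z - fderiv ℝ f x‖ ≤ M * ‖z - x‖)
    (hg' : ∀ z ∈ closedBall x r, ‖fderiv ℝ g z‖ ≤ ε) (hM : 0 ≤ M) (hε : 0 ≤ ε) :
    ApproximatesLinearOn (fun z => f z + g z) (fderiv ℝ f x) (closedBall x r)
      (M * r + ε).toNNReal := by
  refine (convex_closedBall x r).approximatesLinearOn_of_norm_fderiv_sub_le
    (fun z _ => (hf z).add (hg z)) fun z hz => ?_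
  have hzr : ‖z - x‖ ≤ r := mem_closedBall_iff_norm.mp hz
  rw [fderiv_fun_add (hf z) (hg z), add_sub_right_comm,
    Real.coe_toNNReal _ (by nlinarith [norm_nonneg (z - x)])]
  calc ‖fderiv ℝ f z - fderiv ℝ f x + fderiv ℝ g z‖
      ≤ M * ‖z - x‖ + ε := (norm_add_le _ _).trans (add_le_add (hf' z hz) (hg' z hz))
    _ ≤ M * r + ε := by gcongr

end InverseFunction

theorem radius_bounds_of_le_min {δ M μ ε : ℝ} (hδ : 0 < δ) (hM : 0 < M) (hμ : 0 < μ)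
    (hε0 : 0 ≤ ε)
    (hε : ε ≤ min (min (μ / 2) (μ ^ 2 / (32 * M))) (min (μ * δ / 12) M)) :
    4 * ε / μ < δ ∧ ε ≤ (μ - (M * (4 * ε / μ) + ε)) * (4 * ε / μ) := by
  simp only [le_min_iff] at hε
  obtain ⟨⟨hε1, hε2⟩, hε3, -⟩ := hε
  rw [le_div_iff₀ (by positivity)] at hε2
  have hμr : μ * (4 * ε / μ) = 4 * ε := by field_simp
  constructor
  · rw [div_lt_iff₀ hμ]
    nlinarith
  · have hMr : M * (4 * ε / μ) ≤ μ / 8 := by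
      rw [← mul_div_assoc, div_le_div_iff₀ hμ (by norm_num)]
      nlinarith
    nlinarith [div_nonneg (mul_nonneg zero_le_four hε0) hμ.le]

theorem statement1_general {d : ℕ} (E Eδ : EuclideanSpace ℝ (Fin d) → ℝ)
    (hE : ContDiff ℝ 2 E) (hEδ : ContDiff ℝ 2 Eδ)
    (xstar : EuclideanSpace ℝ (Fin d)) (hcrit : gradient E xstar = 0)
    (δ M μ L ε : ℝ) (hδ : 0 < δ) (hM : 0 < M) (hμ : 0 < μ)
    (hLip : ∀ x ∈ Metric.ball xstar δ, ∀ y ∈ Metric.ball xstar δ,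
      ‖fderiv ℝ (gradient E) x - fderiv ℝ (gradient E) y‖ ≤ M * ‖x - y‖)
    (hmod : ∀ x ∈ Metric.ball xstar δ, ∀ lam : ℝ,
      Module.End.HasEigenvalue
        ((fderiv ℝ (gradient E) x).toLinearMap) lam → μ ≤ |lam| ∧ |lam| ≤ L)
    (hδHess : ∀ x ∈ Metric.ball xstar δ, ‖fderiv ℝ (gradient Eδ) x‖ ≤ ε)
    (hδGrad : ∀ x ∈ Metric.ball xstar δ, ‖gradient Eδ x‖ ≤ ε)
    (hεsmall : ε ≤ min (min (μ / 2) (μ ^ 2 / (32 * M))) (min (μ * δ / 12) M)) :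
    ∃ xnn : EuclideanSpace ℝ (Fin d),
      gradient (fun x => E x + Eδ x) xnn = 0 ∧ ‖xnn - xstar‖ ≤ 4 * ε / μ := by
  have hxstar : xstar ∈ ball xstar δ := mem_ball_self hδ
  have hε0 : 0 ≤ ε := (norm_nonneg _).trans (hδGrad xstar hxstar)
  obtain ⟨hrδ, hfx⟩ := radius_bounds_of_le_min hδ hM hμ hε0 hεsmall
  set r := 4 * ε / μ
  set A := fderiv ℝ (gradient E) xstar
  have hA : ∀ v, μ * ‖v‖ ≤ ‖A v‖ :=
    hE.contDiffAt.isSymmetric_fderiv_gradient.mul_norm_le_norm_apply hμ.le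
      fun lam h => (hmod xstar hxstar lam h).1
  have hgE : Differentiable ℝ (gradient E) := (hE.gradient (n := 1)).differentiable one_ne_zero
  have hgEδ : Differentiable ℝ (gradient Eδ) :=
    (hEδ.gradient (n := 1)).differentiable one_ne_zero
  have hball : closedBall xstar r ⊆ ball xstar δ := closedBall_subset_ball hrδ
  have happrox := approximatesLinearOn_add_closedBall hgE hgEδ
    (fun z hz => hLip z (hball hz) xstar hxstar) (fun z hz => hδHess z (hball hz)) hM.le hε0
  obtain ⟨y, hy, hy0⟩ := happrox.exists_eq_zero_mem_closedBall hμ hA (by positivity) (by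
    rw [hcrit, zero_add, Real.coe_toNNReal _ (by positivity)]
    exact (hδGrad xstar hxstar).trans hfx)
  refine ⟨y, ?_, mem_closedBall_iff_norm.mp hy⟩
  rwa [gradient_fun_add (hE.differentiable two_ne_zero y) (hEδ.differentiable two_ne_zero y)]

/-- Theorem 4.6: if the surrogate error `E_δ` is sufficiently small in
`C²` on a neighborhood of a nondegenerate critical point `x*` of `E`, then the
surrogate `E_NN = E + E_δ` has a critical point within distance `4ε/μ` of `x*`. -/
theorem statement1 {d : ℕ} (E Eδ : EuclideanSpace ℝ (Fin d) → ℝ)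
    (hE : ContDiff ℝ 2 E) (hEδ : ContDiff ℝ 2 Eδ)
    (xstar : EuclideanSpace ℝ (Fin d)) (hcrit : gradient E xstar = 0)
    (δ M μ L ε : ℝ) (hδ : 0 < δ) (hM : 0 < M) (hμ : 0 < μ) (hμL : μ < L)
    (hLip : ∀ x ∈ Metric.ball xstar δ, ∀ y ∈ Metric.ball xstar δ,
      ‖fderiv ℝ (gradient E) x - fderiv ℝ (gradient E) y‖ ≤ M * ‖x - y‖)
    (hmod : ∀ x ∈ Metric.ball xstar δ, ∀ lam : ℝ,
      Module.End.HasEigenvalue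
        ((fderiv ℝ (gradient E) x).toLinearMap) lam → μ ≤ |lam| ∧ |lam| ≤ L)
    (hδLip : ∀ x ∈ Metric.ball xstar δ, ∀ y ∈ Metric.ball xstar δ,
      ‖fderiv ℝ (gradient Eδ) x - fderiv ℝ (gradient Eδ) y‖ ≤ ε * ‖x - y‖)
    (hδHess : ∀ x ∈ Metric.ball xstar δ, ‖fderiv ℝ (gradient Eδ) x‖ ≤ ε)
    (hδGrad : ∀ x ∈ Metric.ball xstar δ, ‖gradient Eδ x‖ ≤ ε)
    (hεsmall : ε ≤ min (min (μ / 2) (μ ^ 2 / (32 * M))) (min (μ * δ / 12) M)) :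
    ∃ xnn : EuclideanSpace ℝ (Fin d),
      gradient (fun x => E x + Eδ x) xnn = 0 ∧ ‖xnn - xstar‖ ≤ 4 * ε / μ :=
  statement1_general E Eδ hE hEδ xstar hcrit δ M μ L ε hδ hM hμ hLip hmod hδHess hδGrad hεsmall
end

section
/- Let 0 < μ < L, κ = L/μ, and let (r_n) be a nonnegative sequence satisfying r_{n+1} ≤ (1 − 2/(κ+1)) r_n + (M/(L+μ)) r_n² for all n, with r₀ < r̂ := 2μ/M. Then r_n ≤ (1 − 2/(κ+3))ⁿ · r̂ r₀/(r̂ − r₀) for all n ≥ 0, and in particular r_n → 0. -/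
/-- core recursive estimate in the local convergence proof of discrete
HiSD, Lemma 4.3: a nonnegative sequence satisfying the quadratic recursion
`r_{n+1} ≤ (1 - 2/(κ+1)) rₙ + (M/(L+μ)) rₙ²` with `r₀ < r̂ = 2μ/M` converges
linearly with rate `1 - 2/(κ+3)`. -/
theorem statement9 (μ L M : ℝ) (hμ : 0 < μ) (hμL : μ < L) (hM : 0 < M)
    (r : ℕ → ℝ) (hr0 : ∀ n, 0 ≤ r n)
    (hrec : ∀ n, r (n + 1) ≤ (1 - 2 / (L / μ + 1)) * r n + (M / (L + μ)) * (r n) ^ 2)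
    (hinit : r 0 < 2 * μ / M) :
    (∀ n, r n ≤ (1 - 2 / (L / μ + 3)) ^ n *
        ((2 * μ / M) * r 0 / (2 * μ / M - r 0))) ∧
      Filter.Tendsto r Filter.atTop (nhds 0) := by
  have hL : 0 < L := hμ.trans hμL
  have hLμ : 0 < L + μ := by linarith
  have hL3 : 0 < L + 3 * μ := by linarith
  have hμne : μ ≠ 0 := hμ.ne'
  have hMr0 : M * r 0 < 2 * μ := by
    rw [lt_div_iff₀ hM] at hinit; linarith
  have hqeq : (1 - 2 / (L / μ + 3)) = (L + μ) / (L + 3 * μ) := by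
    rw [div_add' _ _ _ hμne, div_div_eq_mul_div]
    rw [eq_div_iff hL3.ne', sub_mul, div_mul_cancel₀ _ hL3.ne']
    ring
  have hreq : (1 - 2 / (L / μ + 1)) = (L - μ) / (L + μ) := by
    rw [div_add' _ _ _ hμne, div_div_eq_mul_div,
      show L + 1 * μ = L + μ from by ring]
    rw [eq_div_iff hLμ.ne', sub_mul, div_mul_cancel₀ _ hLμ.ne']
    ring
  set q : ℝ := (L + μ) / (L + 3 * μ) with hq
  have hq0 : 0 < q := div_pos hLμ hL3
  have hq1 : q < 1 := by
    rw [div_lt_one hL3]; linarith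
  -- linearized recursion
  have hrec' : ∀ n, (L + μ) * r (n + 1) ≤ (L - μ) * r n + M * (r n) ^ 2 := by
    intro n
    have h := hrec n
    rw [hreq] at h
    have h2 := mul_le_mul_of_nonneg_left h hLμ.le
    have heq : (L + μ) * ((L - μ) / (L + μ) * r n + M / (L + μ) * (r n) ^ 2)
        = (L - μ) * r n + M * (r n) ^ 2 := by
      field_simp
    linarith [h2, heq.le, heq.ge]
  -- monotonicity / boundedness invariant
  have hbnd : ∀ n, M * r n < 2 * μ := by
    intro n
    induction n with
    | zero => exact hMr0
    | succ n ih =>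
      have ha := hr0 n
      have h := hrec' n
      -- r(n+1) ≤ r n
      have hmono : r (n + 1) ≤ r n := by nlinarith
      nlinarith
  have hmono : ∀ n, r (n + 1) ≤ r n := by
    intro n
    have := hbnd n
    have := hrec' n
    have := hr0 n
    nlinarith
  -- key invariant
  have key : ∀ n, r n * (2 * μ - M * r 0) ≤ q ^ n * r 0 * (2 * μ - M * r n) := by
    intro n
    induction n with
    | zero => simp
    | succ n ih =>
      set a := r n with hadef
      set b := r (n + 1) with hbdef
      have ha : 0 ≤ a := hr0 n
      have hb : 0 ≤ b := hr0 (n + 1)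
      have haμ : M * a < 2 * μ := hbnd n
      have hbμ : M * b < 2 * μ := hbnd (n + 1)
      have hstep : (L + 3 * μ) * b * (2 * μ - M * a) ≤ (L + μ) * a * (2 * μ - M * b) := by
        have h := hrec' n
        nlinarith [mul_nonneg (sub_nonneg.2 h) (by nlinarith : (0:ℝ) ≤ L + 3 * μ - M * a),
          mul_nonneg ha (sq_nonneg (M * a - 2 * μ))]
      -- divide step by (L+3μ): b*(2μ-Ma) ≤ q*a*(2μ-Mb)
      have hstep' : b * (2 * μ - M * a) ≤ q * a * (2 * μ - M * b) := by
        rw [hq]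
        rw [div_mul_eq_mul_div, div_mul_eq_mul_div, le_div_iff₀ hL3]
        nlinarith [hstep]
      have htn : 0 ≤ q ^ n * r 0 := mul_nonneg (pow_nonneg hq0.le n) (hr0 0)
      have hgoal : b * (2 * μ - M * r 0) ≤ q * (q ^ n * r 0) * (2 * μ - M * b) := by
        nlinarith [mul_le_mul_of_nonneg_right hstep' (by linarith : (0:ℝ) ≤ 2 * μ - M * r 0),
          mul_le_mul_of_nonneg_left ih (mul_nonneg hq0.le (by linarith : (0:ℝ) ≤ 2 * μ - M * b)),
          haμ]
      calc b * (2 * μ - M * r 0) ≤ q * (q ^ n * r 0) * (2 * μ - M * b) := hgoal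
        _ = q ^ (n + 1) * r 0 * (2 * μ - M * b) := by ring
  constructor
  · intro n
    rw [hqeq]
    have hconst : (2 * μ / M) * r 0 / (2 * μ / M - r 0) = 2 * μ * r 0 / (2 * μ - M * r 0) := by
      rw [div_eq_div_iff (ne_of_gt (by rw [sub_pos]; exact hinit))
        (by linarith : (0:ℝ) < 2 * μ - M * r 0).ne']
      field_simp
    rw [hconst, ← mul_div_assoc, le_div_iff₀ (by linarith : (0:ℝ) < 2 * μ - M * r 0)]
    have hkey := key n
    have hqn : 0 ≤ q ^ n * r 0 * (M * r n) :=
      mul_nonneg (mul_nonneg (pow_nonneg hq0.le n) (hr0 0)) (mul_nonneg hM.le (hr0 n))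
    linarith [hkey, hqn]
  · -- squeeze
    have hC : 0 ≤ 2 * μ * r 0 / (2 * μ - M * r 0) :=
      div_nonneg (mul_nonneg (by positivity) (hr0 0)) (by linarith)
    have hb : ∀ n, r n ≤ q ^ n * (2 * μ * r 0 / (2 * μ - M * r 0)) := by
      intro n
      rw [← mul_div_assoc, le_div_iff₀ (by linarith : (0:ℝ) < 2 * μ - M * r 0)]
      have hkey := key n
      have hqn : 0 ≤ q ^ n * r 0 * (M * r n) :=
        mul_nonneg (mul_nonneg (pow_nonneg hq0.le n) (hr0 0)) (mul_nonneg hM.le (hr0 n))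
      linarith [hkey, hqn]
    have hg0 : Filter.Tendsto (fun n : ℕ => q ^ n) Filter.atTop (nhds 0) :=
      tendsto_pow_atTop_nhds_zero_of_lt_one hq0.le hq1
    have hg := hg0.mul_const (2 * μ * r 0 / (2 * μ - M * r 0))
    rw [zero_mul] at hg
    exact squeeze_zero hr0 hb hg
end

section
/- Let A be a symmetric d×d matrix with eigenvalues of modulus in [μ−ε, L+ε], exactly k of them negative, and let P = I − 2∑_{i=1}^k v_i v_iᵀ where v₁,...,v_k are orthonormal eigenvectors of A for the negative eigenvalues. With step size β = 2/(L+μ), the iteration matrix I − βPA is symmetric and satisfies ‖I − βPA‖₂ ≤ 1 − 2(μ−ε)/(L+μ) < 1. -/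
open scoped RealInnerProductSpace

/-- linearized one-step contraction of HiSD/NN-HiSD: if the symmetric
operator `A` has eigenvalue moduli in `[μ-ε, L+ε]`, exactly `k` negative eigenvalues
with orthonormal eigenvectors `v₁,…,v_k` spanning the negative eigenspaces, then with
`β = 2/(L+μ)` and the reflection `P = I - 2∑ vᵢvᵢᵀ`, the iteration matrix `I - βPA`
is symmetric with `‖I - βPA‖ ≤ 1 - 2(μ-ε)/(L+μ) < 1`. -/
theorem statement13 {d k : ℕ}
    (A : EuclideanSpace ℝ (Fin d) →L[ℝ] EuclideanSpace ℝ (Fin d))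
    (hA : IsSelfAdjoint A)
    (μ L ε : ℝ) (hμε : 0 < μ - ε) (hμL : μ < L) (hεpos : 0 ≤ ε)
    (hεhalf : ε ≤ (L - μ) / 2)
    (hmod : ∀ t : ℝ, Module.End.HasEigenvalue (A.toLinearMap) t →
      μ - ε ≤ |t| ∧ |t| ≤ L + ε)
    (v : Fin k → EuclideanSpace ℝ (Fin d)) (hv : Orthonormal ℝ v)
    (lam : Fin k → ℝ) (hlneg : ∀ i, lam i < 0) (heig : ∀ i, A (v i) = lam i • v i)
    (hnegspan : ∀ t : ℝ, t < 0 →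
      Module.End.eigenspace (A.toLinearMap) t ≤ Submodule.span ℝ (Set.range v))
    (P : EuclideanSpace ℝ (Fin d) →L[ℝ] EuclideanSpace ℝ (Fin d))
    (hP : P = 1 - (2 : ℝ) • ∑ i, (innerSL ℝ (v i)).smulRight (v i))
    (β : ℝ) (hβ : β = 2 / (L + μ)) :
    IsSelfAdjoint (1 - β • (P * A)) ∧
      ‖1 - β • (P * A)‖ ≤ 1 - 2 * (μ - ε) / (L + μ) ∧
      1 - 2 * (μ - ε) / (L + μ) < 1 := by
  have hμ0 : 0 < μ := by linarith
  have hLμ : 0 < L + μ := by linarith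
  have hβ0 : 0 < β := by rw [hβ]; positivity
  set c : ℝ := 1 - 2 * (μ - ε) / (L + μ) with hcdef
  have hcform : c = 1 - β * (μ - ε) := by
    rw [hcdef, hβ]; ring
  have hβLμ : β * (L + μ) = 2 := by
    rw [hβ]; field_simp
  have hc0 : 0 ≤ c := by
    rw [hcdef, sub_nonneg, div_le_one hLμ]; linarith
  have hc1 : c < 1 := by
    rw [hcdef]
    have : 0 < 2 * (μ - ε) / (L + μ) := by positivity
    linarith
  set M : EuclideanSpace ℝ (Fin d) →L[ℝ] EuclideanSpace ℝ (Fin d) :=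
    1 - β • (P * A) with hM
  -- formula for P
  have hPapp : ∀ x, P x = x - (2 : ℝ) • ∑ i, (⟪v i, x⟫ : ℝ) • v i := by
    intro x
    simp [hP, ContinuousLinearMap.sum_apply]
  have hAsym : (A : EuclideanSpace ℝ (Fin d) →ₗ[ℝ] EuclideanSpace ℝ (Fin d)).IsSymmetric :=
    ContinuousLinearMap.isSelfAdjoint_iff_isSymmetric.mp hA
  have hAsym' : ∀ x y : EuclideanSpace ℝ (Fin d), (⟪A x, y⟫ : ℝ) = ⟪x, A y⟫ :=
    fun x y => hAsym x y
  have hvA : ∀ i x, (⟪v i, A x⟫ : ℝ) = lam i * ⟪v i, x⟫ := by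
    intro i x
    rw [← hAsym' (v i) x, heig i, real_inner_smul_left]
  -- symmetry of M
  have hMsym : (M : EuclideanSpace ℝ (Fin d) →ₗ[ℝ] EuclideanSpace ℝ (Fin d)).IsSymmetric := by
    have key : ∀ x y, (⟪P (A x), y⟫ : ℝ)
        = ⟪A x, y⟫ - 2 * ∑ i, lam i * ⟪v i, x⟫ * ⟪v i, y⟫ := by
      intro x y
      rw [hPapp, inner_sub_left, real_inner_smul_left, sum_inner]
      rw [Finset.sum_congr rfl (fun i (_ : i ∈ Finset.univ) => by
        rw [real_inner_smul_left, hvA i x] : ∀ i ∈ Finset.univ,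
          (⟪(⟪v i, A x⟫ : ℝ) • v i, y⟫ : ℝ) = lam i * ⟪v i, x⟫ * ⟪v i, y⟫)]
    intro x y
    simp only [hM, ContinuousLinearMap.coe_coe, ContinuousLinearMap.sub_apply,
      ContinuousLinearMap.one_apply, ContinuousLinearMap.smul_apply,
      ContinuousLinearMap.mul_apply]
    rw [inner_sub_left, inner_sub_right, real_inner_smul_left, real_inner_smul_right,
      key x y]
    have : (⟪x, P (A y)⟫ : ℝ) = ⟪P (A y), x⟫ := real_inner_comm _ _
    rw [this, key y x, hAsym' x y]
    have hcomm : ∀ i, lam i * ⟪v i, x⟫ * ⟪v i, y⟫ = lam i * ⟪v i, y⟫ * ⟪v i, x⟫ := by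
      intro i; ring
    rw [Finset.sum_congr rfl fun i _ => hcomm i, real_inner_comm x (A y)]
  have hMsa : IsSelfAdjoint M := ContinuousLinearMap.isSelfAdjoint_iff_isSymmetric.mpr hMsym
  -- eigenbasis of A
  have hd : Module.finrank ℝ (EuclideanSpace ℝ (Fin d)) = d := finrank_euclideanSpace_fin
  set b := hAsym.eigenvectorBasis hd with hb
  set α := hAsym.eigenvalues hd with hα
  have hAb : ∀ j, A (b j) = α j • b j := fun j => hAsym.apply_eigenvectorBasis hd j
  have hαmod : ∀ j, μ - ε ≤ |α j| ∧ |α j| ≤ L + ε := fun j =>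
    hmod (α j) (hAsym.hasEigenvalue_eigenvalues hd j)
  set m : Fin d → ℝ := fun j => 1 - β * |α j| with hm
  -- projection identity on the span of v
  have hQid : ∀ y ∈ Submodule.span ℝ (Set.range v), (∑ i, (⟪v i, y⟫ : ℝ) • v i) = y := by
    intro y hy
    induction hy using Submodule.span_induction with
    | mem z hz =>
        obtain ⟨i, rfl⟩ := hz
        rw [Finset.sum_eq_single i]
        · rw [orthonormal_iff_ite.mp hv i i]; simp
        · intro j _ hj
          rw [orthonormal_iff_ite.mp hv j i, if_neg hj, zero_smul]
        · simp
    | zero => simp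
    | add y z _ _ hy hz =>
        simp only [inner_add_right, add_smul, Finset.sum_add_distrib, hy, hz]
    | smul t y _ hy =>
        simp only [real_inner_smul_right, mul_smul, ← Finset.smul_sum]
        rw [hy]
  -- M acts diagonally on b
  have hMb : ∀ j, M (b j) = m j • b j := by
    intro j
    have hαj : α j ≠ 0 := by
      intro h
      have := (hαmod j).1
      rw [h, abs_zero] at this; linarith
    have hPA : P (A (b j)) = |α j| • b j := by
      rw [hAb j, map_smul]
      rcases lt_or_gt_of_ne hαj with hneg | hpos
      · -- b j in span of v, P acts as -1
        have hmem : b j ∈ Submodule.span ℝ (Set.range v) := by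
          refine hnegspan (α j) hneg ?_
          rw [Module.End.mem_eigenspace_iff]
          exact hAb j
        have : P (b j) = - b j := by
          rw [hPapp, hQid _ hmem]
          module
        rw [this, abs_of_neg hneg, smul_neg, neg_smul, ← neg_smul]
      · -- b j orthogonal to all v i, P acts as identity
        have horth : ∀ i, (⟪v i, b j⟫ : ℝ) = 0 := by
          intro i
          have h1 : lam i * ⟪v i, b j⟫ = α j * ⟪v i, b j⟫ := by
            rw [← hvA i (b j), hAb j, real_inner_smul_right]
          have h2 : lam i ≠ α j := ne_of_lt (lt_trans (hlneg i) hpos)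
          by_contra h
          exact h2 (mul_right_cancel₀ h h1)
        have : P (b j) = b j := by
          rw [hPapp]
          simp [horth]
        rw [this, abs_of_pos hpos]
    show b j - β • (P (A (b j))) = m j • b j
    rw [hPA, hm, sub_smul, one_smul, smul_smul]
  have hmbound : ∀ j, |m j| ≤ c := by
    intro j
    obtain ⟨h1, h2⟩ := hαmod j
    have hmj : m j = 1 - β * |α j| := rfl
    rw [abs_le, hcform, hmj]
    have e1 : β * |α j| ≤ β * (L + ε) := mul_le_mul_of_nonneg_left h2 (le_of_lt hβ0)
    have e2 : β * (μ - ε) ≤ β * |α j| := mul_le_mul_of_nonneg_left h1 (le_of_lt hβ0)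
    have e3 : β * (L + ε) + β * (μ - ε) = β * (L + μ) := by ring
    constructor
    · linarith [hβLμ]
    · linarith
  -- norm bound via eigenbasis
  have hnorm : ‖M‖ ≤ c := by
    refine M.opNorm_le_bound hc0 fun x => ?_
    have hrepr : ∀ j, b.repr (M x) j = m j * b.repr x j := by
      intro j
      rw [b.repr_apply_apply, b.repr_apply_apply]
      have h1 : (⟪b j, M x⟫ : ℝ) = ⟪M (b j), x⟫ := by
        calc (⟪b j, M x⟫ : ℝ) = ⟪M x, b j⟫ := real_inner_comm _ _
          _ = ⟪x, M (b j)⟫ := hMsym x (b j)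
          _ = ⟪M (b j), x⟫ := real_inner_comm _ _
      rw [h1, hMb j, real_inner_smul_left]
    have h1 : ‖M x‖ = ‖b.repr (M x)‖ := (b.repr.norm_map (M x)).symm
    have h2 : ‖x‖ = ‖b.repr x‖ := (b.repr.norm_map x).symm
    rw [h1, h2, EuclideanSpace.norm_eq, EuclideanSpace.norm_eq]
    have hsum : ∑ j, ‖b.repr (M x) j‖ ^ 2 ≤ c ^ 2 * ∑ j, ‖b.repr x j‖ ^ 2 := by
      rw [Finset.mul_sum]
      refine Finset.sum_le_sum fun j _ => ?_
      rw [hrepr j]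
      have := hmbound j
      have h3 : (m j) ^ 2 ≤ c ^ 2 := sq_le_sq' (by linarith [neg_abs_le (m j), abs_le.mp this]) (le_trans (le_abs_self _) this)
      calc ‖m j * b.repr x j‖ ^ 2 = (m j) ^ 2 * ‖b.repr x j‖ ^ 2 := by
            rw [norm_mul, mul_pow]; congr 1; rw [Real.norm_eq_abs, sq_abs]
        _ ≤ c ^ 2 * ‖b.repr x j‖ ^ 2 := by
            exact mul_le_mul_of_nonneg_right h3 (by positivity)
    calc Real.sqrt (∑ j, ‖b.repr (M x) j‖ ^ 2)
        ≤ Real.sqrt (c ^ 2 * ∑ j, ‖b.repr x j‖ ^ 2) := Real.sqrt_le_sqrt hsum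
      _ = c * Real.sqrt (∑ j, ‖b.repr x j‖ ^ 2) := by
          rw [Real.sqrt_mul (by positivity), Real.sqrt_sq hc0]
  exact ⟨hMsa, hnorm, hc1⟩
end
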